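/- arXiv:2601.08975 — 7 statements merged into one kernel-verified Lean document; each statement's English description precedes it below -/
import Mathlib

section
/- Let Na_e, K_e, Cl_e, Y_e be strictly positive real numbers and z_Y a real number satisfying the osmolarity relation O_e = Na_e + K_e + Cl_e + Y_e and the electroneutrality relation Na_e + K_e - Cl_e + z_Y·Y_e = 0, and set C = Cl_e·(Na_e + K_e). Then 4·C - O_e^2 < 0. -/
/-- Lemma 1: with strictly positive extracellular concentrations,
the extracellular constraints force `4·C - O_e² < 0`. -/
theorem stmt_1 (Na_e K_e Cl_e Y_e z_Y O_e C : ℝ)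
    (hNa : 0 < Na_e) (hK : 0 < K_e) (hCl : 0 < Cl_e) (hY : 0 < Y_e)
    (hO : O_e = Na_e + K_e + Cl_e + Y_e)
    (hE : Na_e + K_e - Cl_e + z_Y * Y_e = 0)
    (hC : C = Cl_e * (Na_e + K_e)) :
    4 * C - O_e ^ 2 < 0 := by
  subst hO hC
  nlinarith [sq_nonneg (Na_e + K_e - Cl_e), sq_nonneg Y_e, mul_pos hCl hY, mul_pos hNa hY, mul_pos hK hY]
end

section
/- Let O, C and z be real numbers with O > 0, C > 0 and 4·C < O^2. Define ξ := (O - sqrt(4·(1 - z^2)·C + z^2·O^2)) / (1 - z^2) if z^2 ≠ 1, and ξ := (O^2 - 4·C) / (2·O) if z^2 = 1. Then ξ > 0. -/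
open Real

/-- positivity of the closed-form impermeant concentration ξ. -/
theorem stmt_2 (O C z ξ : ℝ) (hO : 0 < O) (hC : 0 < C) (h4C : 4 * C < O ^ 2)
    (hξ : ξ = if z ^ 2 = 1 then (O ^ 2 - 4 * C) / (2 * O)
              else (O - Real.sqrt (4 * (1 - z ^ 2) * C + z ^ 2 * O ^ 2)) / (1 - z ^ 2)) :
    0 < ξ := by
  subst hξ
  by_cases h : z ^ 2 = 1
  · simp only [h, if_true]
    exact div_pos (by linarith) (by linarith)
  · simp only [h, if_false]
    set D := 4 * (1 - z ^ 2) * C + z ^ 2 * O ^ 2 with hD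
    rcases lt_trichotomy (z ^ 2) 1 with hlt | heq | hgt
    · have hDlt : D < O ^ 2 := by nlinarith
      have hs : Real.sqrt D < O := (Real.sqrt_lt' hO).mpr hDlt
      exact div_pos (by linarith) (by linarith)
    · exact absurd heq h
    · have hDgt : O ^ 2 < D := by nlinarith
      have hs : O < Real.sqrt D := (Real.lt_sqrt hO.le).mpr hDgt
      exact div_pos_of_neg_of_neg (by linarith) (by linarith)
end

section
/- Let Na_e, K_e, Cl_e, Y_e be strictly positive reals and z_Y real satisfying O_e = Na_e + K_e + Cl_e + Y_e and Na_e + K_e - Cl_e + z_Y·Y_e = 0; set C = Cl_e·(Na_e + K_e). Let z be real, let ξ := (O_e - sqrt(4·(1 - z^2)·C + z^2·O_e^2))/(1 - z^2) if z^2 ≠ 1 and ξ := (O_e^2 - 4·C)/(2·O_e) if z^2 = 1, and let κ > 0 (κ = RT/F). Define Na^eq = 2·Na_e·Cl_e/(O_e + (z - 1)·ξ), K^eq = 2·K_e·Cl_e/(O_e + (z - 1)·ξ), Cl^eq = (O_e + (z - 1)·ξ)/2, and V^eq = κ·ln((O_e + (z - 1)·ξ)/(2·Cl_e)). Then: (i)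 Na^eq + K^eq - Cl^eq + z·ξ = 0 (intracellular electroneutrality); (ii) Na^eq + K^eq + Cl^eq + ξ = O_e (osmotic balance with the bath); and (iii) V^eq = κ·ln(Na_e/Na^eq) = κ·ln(K_e/K^eq) = -κ·ln(Cl_e/Cl^eq) (the voltage equals the Nernst potential of each ion). Consequently every passive ionic flux and every osmotic water flux of the two-compartment ABp pump-leak equations vanishes at these values. -/
open Real

lemma key_lemma (O_e C z ξ : ℝ) (hO : 0 < O_e) (hCpos : 0 < C) (hOC : 4 * C ≤ O_e ^ 2)
    (hξ : ξ = if z ^ 2 = 1 then (O_e ^ 2 - 4 * C) / (2 * O_e)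
              else (O_e - Real.sqrt (4 * (1 - z ^ 2) * C + z ^ 2 * O_e ^ 2)) / (1 - z ^ 2)) :
    0 < O_e + (z - 1) * ξ ∧ (1 - z ^ 2) * ξ ^ 2 - 2 * O_e * ξ + O_e ^ 2 - 4 * C = 0 := by
  by_cases hz : z ^ 2 = 1
  · rw [if_pos hz] at hξ
    have hO' : O_e ≠ 0 := ne_of_gt hO
    have hquad : (1 - z ^ 2) * ξ ^ 2 - 2 * O_e * ξ + O_e ^ 2 - 4 * C = 0 := by
      rw [hξ, hz]; field_simp; ring
    refine ⟨?_, hquad⟩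
    have : (z - 1) * (z + 1) = 0 := by nlinarith
    rcases mul_eq_zero.1 this with h | h
    · have hz1 : z = 1 := by linarith
      rw [hz1]; simpa using hO
    · have hz1 : z = -1 := by linarith
      rw [hz1, hξ]
      have : O_e + (-1 - 1) * ((O_e ^ 2 - 4 * C) / (2 * O_e)) = 4 * C / O_e := by
        field_simp; ring
      rw [this]; positivity
  · rw [if_neg hz] at hξ
    have h1 : 1 - z ^ 2 ≠ 0 := by intro h; apply hz; linarith
    have hΔpos : 0 < 4 * (1 - z ^ 2) * C + z ^ 2 * O_e ^ 2 := by nlinarith [sq_nonneg z]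
    set s := Real.sqrt (4 * (1 - z ^ 2) * C + z ^ 2 * O_e ^ 2) with hs
    have hs2 : s ^ 2 = 4 * (1 - z ^ 2) * C + z ^ 2 * O_e ^ 2 := Real.sq_sqrt hΔpos.le
    have hspos : 0 < s := Real.sqrt_pos.2 hΔpos
    have hrel : ξ * (1 - z ^ 2) = O_e - s := by
      rw [hξ, div_mul_cancel₀ _ h1]
    have hquad : (1 - z ^ 2) * ξ ^ 2 - 2 * O_e * ξ + O_e ^ 2 - 4 * C = 0 := by
      have key : (1 - z ^ 2) * ((1 - z ^ 2) * ξ ^ 2 - 2 * O_e * ξ + O_e ^ 2 - 4 * C) = 0 := by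
        linear_combination (ξ * (1 - z ^ 2) - O_e - s) * hrel + hs2
      rcases mul_eq_zero.1 key with h | h
      · exact absurd h h1
      · exact h
    refine ⟨?_, hquad⟩
    -- (1+z)*(O_e + (z-1)*ξ) = z*O_e + s
    have hz1 : z ≠ 1 := by intro h; apply hz; rw [h]; norm_num
    have hzm1 : z ≠ -1 := by intro h; apply hz; rw [h]; norm_num
    have hD : (1 + z) * (O_e + (z - 1) * ξ) = z * O_e + s := by
      have key : (1 - z) * ((1 + z) * (O_e + (z - 1) * ξ) - (z * O_e + s)) = 0 := by
        linear_combination (z - 1) * hrel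
      rcases mul_eq_zero.1 key with h | h
      · exact absurd (by linarith : z = 1) hz1
      · linarith
    rcases lt_trichotomy z (-1) with hlt | heq | hgt
    · -- z < -1 : 1+z < 0, z*O_e + s < 0
      have h1z : 1 + z < 0 := by linarith
      have hsneg : z * O_e + s < 0 := by
        have hz2 : 1 < z ^ 2 := by nlinarith
        have hlt2 : s ^ 2 < z ^ 2 * O_e ^ 2 := by nlinarith [mul_pos hCpos (show (0:ℝ) < z ^ 2 - 1 by linarith)]
        have h0 : 0 ≤ -(z * O_e) := by nlinarith
        have : s < -(z * O_e) := by
          by_contra h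
          push_neg at h
          have := mul_le_mul h h h0 hspos.le
          nlinarith
        linarith
      have := div_pos_iff.2 (Or.inr ⟨hsneg, h1z⟩)
      have heqD : O_e + (z - 1) * ξ = (z * O_e + s) / (1 + z) := by
        field_simp [show (1:ℝ) + z ≠ 0 by linarith]; linarith [hD]
      rw [heqD]; exact this
    · exact absurd heq hzm1
    · have h1z : 0 < 1 + z := by linarith
      have hspos2 : 0 < z * O_e + s := by
        rcases le_or_gt 0 z with hz0 | hz0
        · positivity
        · have hz2 : z ^ 2 < 1 := by nlinarith
          have hlt2 : z ^ 2 * O_e ^ 2 < s ^ 2 := by nlinarith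
          have h0 : 0 ≤ -(z * O_e) := by nlinarith
          have : -(z * O_e) < s := by
            by_contra h
            push_neg at h
            have := mul_le_mul h h hspos.le h0
            nlinarith
          linarith
      have heqD : O_e + (z - 1) * ξ = (z * O_e + s) / (1 + z) := by
        field_simp [show (1:ℝ) + z ≠ 0 by linarith]; linarith [hD]
      rw [heqD]; positivity

lemma comp_lemma (Na_e K_e Cl_e O_e C z ξ Na K Cl V κ : ℝ)
    (hNae : 0 < Na_e) (hKe : 0 < K_e) (hCle : 0 < Cl_e)
    (hC : C = Cl_e * (Na_e + K_e))
    (hDpos : 0 < O_e + (z - 1) * ξ)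
    (hquad : (1 - z ^ 2) * ξ ^ 2 - 2 * O_e * ξ + O_e ^ 2 - 4 * C = 0)
    (hNaD : Na = 2 * Na_e * Cl_e / (O_e + (z - 1) * ξ))
    (hKD : K = 2 * K_e * Cl_e / (O_e + (z - 1) * ξ))
    (hClD : Cl = (O_e + (z - 1) * ξ) / 2)
    (hV : V = κ * Real.log ((O_e + (z - 1) * ξ) / (2 * Cl_e))) :
    (Na + K - Cl + z * ξ = 0) ∧ (Na + K + Cl + ξ = O_e) ∧
    (V = κ * Real.log (Na_e / Na)) ∧ (V = κ * Real.log (K_e / K)) ∧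
    (V = -(κ * Real.log (Cl_e / Cl))) := by
  have hDne : O_e + (z - 1) * ξ ≠ 0 := ne_of_gt hDpos
  have hi : Na + K - Cl + z * ξ = 0 := by
    have h2 : Na + K - Cl + z * ξ =
        (4 * C - (O_e + (z - 1) * ξ) ^ 2 + 2 * z * ξ * (O_e + (z - 1) * ξ)) /
          (2 * (O_e + (z - 1) * ξ)) := by
      rw [hNaD, hKD, hClD, hC]; field_simp; ring
    rw [h2, show 4 * C - (O_e + (z - 1) * ξ) ^ 2 + 2 * z * ξ * (O_e + (z - 1) * ξ) = 0 from by
      linear_combination -hquad, zero_div]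
  refine ⟨hi, ?_, ?_, ?_, ?_⟩
  · linear_combination hi + 2 * hClD
  · have h1 : Na_e / Na = (O_e + (z - 1) * ξ) / (2 * Cl_e) := by
      rw [hNaD, div_div_eq_mul_div, show 2 * Na_e * Cl_e = Na_e * (2 * Cl_e) by ring,
        mul_div_mul_left _ _ (ne_of_gt hNae)]
    rw [hV, h1]
  · have h1 : K_e / K = (O_e + (z - 1) * ξ) / (2 * Cl_e) := by
      rw [hKD, div_div_eq_mul_div, show 2 * K_e * Cl_e = K_e * (2 * Cl_e) by ring,
        mul_div_mul_left _ _ (ne_of_gt hKe)]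
    rw [hV, h1]
  · have h1 : (Cl_e / Cl)⁻¹ = (O_e + (z - 1) * ξ) / (2 * Cl_e) := by
      rw [inv_div, hClD, div_div]
    rw [hV, ← h1, Real.log_inv]; ring

open Real

/-- Proposition 1: explicit equilibrium of the passive ABp system.
For each compartment `j ∈ {A, B}` with impermeant charge `z_j`, the displayed
values satisfy (i) intracellular electroneutrality, (ii) osmotic balance with
the bath, and (iii) the voltage equals the Nernst potential of each ion.
Consequently every passive ionic flux and every osmotic water flux of the
two-compartment ABp pump-leak equations vanishes at these values. -/
theorem stmt_5 (Na_e K_e Cl_e Y_e z_Y O_e C κ : ℝ) (zA zB ξA ξB : ℝ)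
    (NaA KA ClA VA NaB KB ClB VB OA OB : ℝ)
    (hNa : 0 < Na_e) (hK : 0 < K_e) (hCl : 0 < Cl_e) (hY : 0 < Y_e)
    (hO : O_e = Na_e + K_e + Cl_e + Y_e)
    (hE : Na_e + K_e - Cl_e + z_Y * Y_e = 0)
    (hC : C = Cl_e * (Na_e + K_e))
    (hκ : 0 < κ)
    (hξA : ξA = if zA ^ 2 = 1 then (O_e ^ 2 - 4 * C) / (2 * O_e)
                else (O_e - Real.sqrt (4 * (1 - zA ^ 2) * C + zA ^ 2 * O_e ^ 2)) / (1 - zA ^ 2))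
    (hξB : ξB = if zB ^ 2 = 1 then (O_e ^ 2 - 4 * C) / (2 * O_e)
                else (O_e - Real.sqrt (4 * (1 - zB ^ 2) * C + zB ^ 2 * O_e ^ 2)) / (1 - zB ^ 2))
    (hNaA : NaA = 2 * Na_e * Cl_e / (O_e + (zA - 1) * ξA))
    (hKA : KA = 2 * K_e * Cl_e / (O_e + (zA - 1) * ξA))
    (hClA : ClA = (O_e + (zA - 1) * ξA) / 2)
    (hVA : VA = κ * Real.log ((O_e + (zA - 1) * ξA) / (2 * Cl_e)))
    (hNaB : NaB = 2 * Na_e * Cl_e / (O_e + (zB - 1) * ξB))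
    (hKB : KB = 2 * K_e * Cl_e / (O_e + (zB - 1) * ξB))
    (hClB : ClB = (O_e + (zB - 1) * ξB) / 2)
    (hVB : VB = κ * Real.log ((O_e + (zB - 1) * ξB) / (2 * Cl_e)))
    (hOA : OA = NaA + KA + ClA + ξA)
    (hOB : OB = NaB + KB + ClB + ξB) :
    -- (i) intracellular electroneutrality
    (NaA + KA - ClA + zA * ξA = 0) ∧ (NaB + KB - ClB + zB * ξB = 0) ∧
    -- (ii) osmotic balance with the bath
    (NaA + KA + ClA + ξA = O_e) ∧ (NaB + KB + ClB + ξB = O_e) ∧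
    -- (iii) the voltage equals the Nernst potential of each ion
    (VA = κ * Real.log (Na_e / NaA) ∧ VA = κ * Real.log (K_e / KA) ∧
      VA = -(κ * Real.log (Cl_e / ClA))) ∧
    (VB = κ * Real.log (Na_e / NaB) ∧ VB = κ * Real.log (K_e / KB) ∧
      VB = -(κ * Real.log (Cl_e / ClB))) ∧
    -- consequently all passive ionic fluxes and osmotic water fluxes vanish
    (∀ g1 g2 gp ν1 ν2 νp : ℝ,
      (-g1 * (VA - κ * Real.log (Na_e / NaA)) = 0) ∧
      (-g2 * ((VA - κ * Real.log (Na_e / NaA)) - (VB - κ * Real.log (Na_e / NaB))) = 0) ∧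
      (-gp * (VB - κ * Real.log (Na_e / NaB)) = 0) ∧
      (-g1 * (VA - κ * Real.log (K_e / KA)) = 0) ∧
      (-g2 * ((VA - κ * Real.log (K_e / KA)) - (VB - κ * Real.log (K_e / KB))) = 0) ∧
      (-gp * (VB - κ * Real.log (K_e / KB)) = 0) ∧
      (g1 * (VA - (-(κ * Real.log (Cl_e / ClA)))) = 0) ∧
      (g2 * ((VA - (-(κ * Real.log (Cl_e / ClA)))) - (VB - (-(κ * Real.log (Cl_e / ClB))))) = 0) ∧
      (gp * (VB - (-(κ * Real.log (Cl_e / ClB)))) = 0) ∧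
      (ν1 * (OA - O_e) + ν2 * (OA - OB) = 0) ∧
      (νp * (OB - O_e) - ν2 * (OA - OB) = 0)) := by
  
  have hOpos : 0 < O_e := by rw [hO]; linarith
  have hCpos : 0 < C := by rw [hC]; nlinarith
  have hOC : 4 * C ≤ O_e ^ 2 := by
    rw [hC, hO]
    nlinarith [sq_nonneg (Na_e + K_e - Cl_e), mul_pos hY (show (0:ℝ) < Na_e + K_e + Cl_e by linarith), sq_nonneg Y_e]
  obtain ⟨hDA, hqA⟩ := key_lemma O_e C zA ξA hOpos hCpos hOC hξA
  obtain ⟨hDB, hqB⟩ := key_lemma O_e C zB ξB hOpos hCpos hOC hξB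
  obtain ⟨iA, iiA, eA1, eA2, eA3⟩ :=
    comp_lemma Na_e K_e Cl_e O_e C zA ξA NaA KA ClA VA κ hNa hK hCl hC hDA hqA hNaA hKA hClA hVA
  obtain ⟨iB, iiB, eB1, eB2, eB3⟩ :=
    comp_lemma Na_e K_e Cl_e O_e C zB ξB NaB KB ClB VB κ hNa hK hCl hC hDB hqB hNaB hKB hClB hVB
  have hOAe : OA = O_e := by rw [hOA, iiA]
  have hOBe : OB = O_e := by rw [hOB, iiB]
  refine ⟨iA, iB, iiA, iiB, ⟨eA1, eA2, eA3⟩, ⟨eB1, eB2, eB3⟩, ?_⟩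
  intro g1 g2 gp ν1 ν2 νp
  refine ⟨by rw [eA1]; ring, by rw [eA1, eB1]; ring, by rw [eB1]; ring,
    by rw [eA2]; ring, by rw [eA2, eB2]; ring, by rw [eB2]; ring,
    by rw [eA3]; ring, by rw [eA3, eB3]; ring, by rw [eB3]; ring,
    by rw [hOAe, hOBe]; ring, by rw [hOAe, hOBe]; ring⟩
end

section
/- Let Na_e, K_e, Cl_e be strictly positive reals, O_e > 0, κ > 0 (κ = RT/F), γNa, γK > 0, a1 > 0, GNa, GK > 0, p > 0 and z real. Define Cp = Cl_e·(Na_e·exp(-(γNa·p·a1·GNa)/κ) + K_e·exp((γK·p·a1·GK)/κ)) and assume 0 < 4·Cp < O_e^2. Let ξ := (O_e - sqrt(4·(1 - z^2)·Cp + z^2·O_e^2))/(1 - z^2) if z^2 ≠ 1 and ξ := (O_e^2 - 4·Cp)/(2·O_e) if z^2 = 1, and define Na^ss = 2·Na_e·Cl_e·exp(-(γNa·p·a1·GNa)/κ)/(O_e + (z - 1)·ξ), K^ss = 2·K_e·Cl_e·exp((γK·p·a1·GK)/κ)/(O_e + (z - 1)·ξ), Cl^ss = (O_e + (z - 1)·ξ)/2,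 V^ss = κ·ln((O_e + (z - 1)·ξ)/(2·Cl_e)). Then: (i) Na^ss + K^ss - Cl^ss + z·ξ = 0; (ii) Na^ss + K^ss + Cl^ss + ξ = O_e; (iii) V^ss - κ·ln(Na_e/Na^ss) = -γNa·p·a1·GNa, V^ss - κ·ln(K_e/K^ss) = γK·p·a1·GK, and V^ss + κ·ln(Cl_e/Cl^ss) = 0. -/
open Real

/-- Auxiliary: positivity of `O_e + (z-1)*ξ` and the key quadratic identity. -/
lemma stmt_9_key (O_e Cp z ξ : ℝ) (hO : 0 < O_e)
    (hCp0 : 0 < 4 * Cp) (hCpO : 4 * Cp < O_e ^ 2)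
    (hξ : ξ = if z ^ 2 = 1 then (O_e ^ 2 - 4 * Cp) / (2 * O_e)
              else (O_e - Real.sqrt (4 * (1 - z ^ 2) * Cp + z ^ 2 * O_e ^ 2)) / (1 - z ^ 2)) :
    0 < O_e + (z - 1) * ξ ∧
      (O_e + (z - 1) * ξ) * (O_e - (z + 1) * ξ) = 4 * Cp := by
  by_cases hz : z ^ 2 = 1
  · rw [if_pos hz] at hξ
    have hz' : (z - 1) * (z + 1) = 0 := by nlinarith [hz]
    rcases mul_eq_zero.mp hz' with h | h
    · have hz1 : z = 1 := by linarith
      subst hz1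
      constructor
      · simpa using hO
      · rw [hξ]; field_simp; ring
    · have hz1 : z = -1 := by linarith
      subst hz1
      constructor
      · rw [hξ]
        have : O_e + (-1 - 1) * ((O_e ^ 2 - 4 * Cp) / (2 * O_e)) = 4 * Cp / O_e := by
          field_simp; ring
        rw [this]; positivity
      · rw [hξ]; field_simp; ring
  · rw [if_neg hz] at hξ
    have hz1 : (1 : ℝ) - z ^ 2 ≠ 0 := fun h => hz (by linarith)
    have hApos : 0 < 4 * (1 - z ^ 2) * Cp + z ^ 2 * O_e ^ 2 := by
      rcases le_or_gt (z ^ 2) 1 with h | h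
      · nlinarith [sq_nonneg z, sq_nonneg O_e]
      · nlinarith [sq_nonneg O_e]
    set S := Real.sqrt (4 * (1 - z ^ 2) * Cp + z ^ 2 * O_e ^ 2) with hS
    have hSnn : 0 ≤ S := Real.sqrt_nonneg _
    have hS2 : S ^ 2 = 4 * (1 - z ^ 2) * Cp + z ^ 2 * O_e ^ 2 := Real.sq_sqrt hApos.le
    have hDeq : (O_e + (z - 1) * ξ) * (1 - z ^ 2) = (1 - z) * (z * O_e + S) := by
      rw [hξ]; field_simp; ring
    have h2eq : (O_e - (z + 1) * ξ) * (1 - z ^ 2) = (1 + z) * (S - z * O_e) := by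
      rw [hξ]; field_simp; ring
    have hsq : Real.sqrt (z ^ 2 * O_e ^ 2) = |z| * O_e := by
      rw [show z ^ 2 * O_e ^ 2 = (|z| * O_e) ^ 2 by rw [mul_pow, sq_abs],
        Real.sqrt_sq (by positivity)]
    have hD : 0 < O_e + (z - 1) * ξ := by
      rcases lt_or_gt_of_ne (fun h : z ^ 2 = 1 => hz h) with h | h
      · -- z^2 < 1
        have h12 : 0 < 1 - z ^ 2 := by linarith
        have hlt : Real.sqrt (z ^ 2 * O_e ^ 2) < S :=
          Real.sqrt_lt_sqrt (by positivity) (by nlinarith)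
        rw [hsq] at hlt
        have hSz : 0 < z * O_e + S := by
          have := neg_abs_le z
          nlinarith [abs_nonneg z]
        have hlz : 0 < 1 - z := by nlinarith [sq_abs z, abs_nonneg z]
        nlinarith [hDeq, mul_pos hlz hSz]
      · -- z^2 > 1
        have h12 : 1 - z ^ 2 < 0 := by linarith
        have hlt : S < Real.sqrt (z ^ 2 * O_e ^ 2) :=
          Real.sqrt_lt_sqrt hApos.le (by nlinarith)
        rw [hsq] at hlt
        rcases le_or_gt z 0 with hz0 | hz0
        · have hzlt : z < -1 := by nlinarith
          have hSz : z * O_e + S < 0 := by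
            rw [abs_of_nonpos hz0] at hlt; linarith
          nlinarith [hDeq, mul_pos (by linarith : (0:ℝ) < 1 - z) (by linarith : 0 < -(z * O_e + S))]
        · have hzgt : 1 < z := by nlinarith
          rw [abs_of_pos hz0] at hlt
          nlinarith [hDeq, mul_pos (by linarith : (0:ℝ) < z - 1)
            (by nlinarith : 0 < z * O_e + S)]
    refine ⟨hD, ?_⟩
    have hkey' : ((O_e + (z - 1) * ξ) * (O_e - (z + 1) * ξ)) * (1 - z ^ 2) ^ 2
        = (4 * Cp) * (1 - z ^ 2) ^ 2 := by
      linear_combination ((O_e - (z + 1) * ξ) * (1 - z ^ 2)) * hDeq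
        + ((1 - z) * (z * O_e + S)) * h2eq + (1 - z ^ 2) * hS2
    exact mul_right_cancel₀ (pow_ne_zero _ hz1) hkey'

/-- Proposition 2: explicit steady state of the active ABp system
with constant basolateral NKA pump, for one compartment with impermeant
charge `z`. -/
theorem stmt_9 (Na_e K_e Cl_e O_e κ γNa γK a1 GNa GK p z : ℝ)
    (Cp ξ Nass Kss Clss Vss : ℝ)
    (hNa : 0 < Na_e) (hK : 0 < K_e) (hCl : 0 < Cl_e) (hO : 0 < O_e)
    (hκ : 0 < κ) (hγNa : 0 < γNa) (hγK : 0 < γK) (ha1 : 0 < a1)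
    (hGNa : 0 < GNa) (hGK : 0 < GK) (hp : 0 < p)
    (hCp : Cp = Cl_e * (Na_e * Real.exp (-(γNa * p * a1 * GNa) / κ)
        + K_e * Real.exp ((γK * p * a1 * GK) / κ)))
    (hCp0 : 0 < 4 * Cp) (hCpO : 4 * Cp < O_e ^ 2)
    (hξ : ξ = if z ^ 2 = 1 then (O_e ^ 2 - 4 * Cp) / (2 * O_e)
              else (O_e - Real.sqrt (4 * (1 - z ^ 2) * Cp + z ^ 2 * O_e ^ 2)) / (1 - z ^ 2))
    (hNass : Nass = 2 * Na_e * Cl_e * Real.exp (-(γNa * p * a1 * GNa) / κ)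
        / (O_e + (z - 1) * ξ))
    (hKss : Kss = 2 * K_e * Cl_e * Real.exp ((γK * p * a1 * GK) / κ)
        / (O_e + (z - 1) * ξ))
    (hClss : Clss = (O_e + (z - 1) * ξ) / 2)
    (hVss : Vss = κ * Real.log ((O_e + (z - 1) * ξ) / (2 * Cl_e))) :
    -- (i) intracellular electroneutrality
    Nass + Kss - Clss + z * ξ = 0 ∧
    -- (ii) osmotic balance with the bath
    Nass + Kss + Clss + ξ = O_e ∧
    -- (iii) shifted Nernst relations
    (Vss - κ * Real.log (Na_e / Nass) = -(γNa * p * a1 * GNa) ∧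
     Vss - κ * Real.log (K_e / Kss) = γK * p * a1 * GK ∧
     Vss + κ * Real.log (Cl_e / Clss) = 0) := by
  obtain ⟨hD, hkey⟩ := stmt_9_key O_e Cp z ξ hO hCp0 hCpO hξ
  have hDne : O_e + (z - 1) * ξ ≠ 0 := hD.ne'
  have hsum : Nass + Kss = 2 * Cp / (O_e + (z - 1) * ξ) := by
    rw [hNass, hKss, hCp, ← add_div]
    congr 1
    ring
  have hEE1 : Real.exp (-(γNa * p * a1 * GNa) / κ) * Real.exp (γNa * p * a1 * GNa / κ) = 1 := by
    rw [← Real.exp_add, show -(γNa * p * a1 * GNa) / κ + γNa * p * a1 * GNa / κ = 0 by ring,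
      Real.exp_zero]
  have hEE2 : Real.exp (γK * p * a1 * GK / κ) * Real.exp (-(γK * p * a1 * GK) / κ) = 1 := by
    rw [← Real.exp_add, show γK * p * a1 * GK / κ + -(γK * p * a1 * GK) / κ = 0 by ring,
      Real.exp_zero]
  refine ⟨?_, ?_, ?_, ?_, ?_⟩
  · rw [hsum, hClss]
    field_simp
    linear_combination -hkey
  · rw [hsum, hClss]
    field_simp
    linear_combination -hkey
  · have hratio : Na_e / Nass
        = (O_e + (z - 1) * ξ) / (2 * Cl_e) * Real.exp (γNa * p * a1 * GNa / κ) := by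
      rw [hNass]
      rw [div_div_eq_mul_div, div_mul_eq_mul_div, div_eq_div_iff
        (by positivity) (by positivity)]
      linear_combination (-(2 * Na_e * Cl_e * (O_e + (z - 1) * ξ))) * hEE1
    rw [hVss, hratio, Real.log_mul (by positivity) (Real.exp_pos _).ne',
      Real.log_exp, mul_add, mul_div_cancel₀ _ hκ.ne']
    ring
  · have hratio : K_e / Kss
        = (O_e + (z - 1) * ξ) / (2 * Cl_e) * Real.exp (-(γK * p * a1 * GK) / κ) := by
      rw [hKss]
      rw [div_div_eq_mul_div, div_mul_eq_mul_div, div_eq_div_iff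
        (by positivity) (by positivity)]
      linear_combination (-(2 * K_e * Cl_e * (O_e + (z - 1) * ξ))) * hEE2
    rw [hVss, hratio, Real.log_mul (by positivity) (Real.exp_pos _).ne',
      Real.log_exp, mul_add, mul_div_cancel₀ _ hκ.ne']
    ring
  · have hratio : Cl_e / Clss = ((O_e + (z - 1) * ξ) / (2 * Cl_e))⁻¹ := by
      rw [hClss, inv_div]
      rw [div_eq_div_iff (by positivity) (by positivity)]
      ring
    rw [hVss, hratio, Real.log_inv]
    ring
end

section
/- Consider the Koefoed-Johnsen–Ussing configuration of the ABp system: g_{Na,1} = 0, g_{K,2} = 0, with g_{Na,2}, g_{Na,p}, g_{K,1}, g_{K,p} strictly positive. Then the conductance combinations satisfy G_{K,B} = 0, G_{K,A} = 1/g_{K,1}, and G_{Na,B} = 1/g_{Na,p}. Consequently, for strictly positive Na_e, K_e, Cl_e, α, γNa, the function C_B(p) = Cl_e·(Na_e·exp(-α·γNa·p/g_{Na,p}) + K_e) is strictly decreasing in p, and if 4·Cl_e·(Na_e + K_e) < O_e^2 then 4·C_B(p) < O_e^2 for every p ≥ 0. -/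
open Real

/-- Koefoed-Johnsen–Ussing configuration (`g_{Na,1} = 0`,
`g_{K,2} = 0`): values of the conductance combinations, strict monotonicity
of the compartment-B concentration product, and `p_max,B = ∞`. -/
theorem stmt_13 (gNa1 gNa2 gNap gK1 gK2 gKp : ℝ)
    (hNa1 : gNa1 = 0) (hK2 : gK2 = 0)
    (hNa2 : 0 < gNa2) (hNap : 0 < gNap) (hK1 : 0 < gK1) (hKp : 0 < gKp)
    (GNaB GKA GKB : ℝ)
    (hGNaB : GNaB = gNa2 / (gNa1 * gNa2 + gNa1 * gNap + gNa2 * gNap))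
    (hGKA : GKA = (gK2 + gKp) / (gK1 * gK2 + gK1 * gKp + gK2 * gKp))
    (hGKB : GKB = gK2 / (gK1 * gK2 + gK1 * gKp + gK2 * gKp))
    (Na_e K_e Cl_e α γNa O_e : ℝ)
    (hNa : 0 < Na_e) (hK : 0 < K_e) (hCl : 0 < Cl_e) (hα : 0 < α) (hγNa : 0 < γNa)
    (CB : ℝ → ℝ)
    (hCB : ∀ p, CB p = Cl_e * (Na_e * Real.exp (-(α * γNa * p / gNap)) + K_e)) :
    GKB = 0 ∧ GKA = 1 / gK1 ∧ GNaB = 1 / gNap ∧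
    StrictAnti CB ∧
    (4 * Cl_e * (Na_e + K_e) < O_e ^ 2 → ∀ p : ℝ, 0 ≤ p → 4 * CB p < O_e ^ 2) := by
  subst hNa1 hK2
  refine ⟨by rw [hGKB]; simp, ?_, ?_, ?_, ?_⟩
  · rw [hGKA]; field_simp; ring
  · rw [hGNaB]; field_simp; ring
  · intro x y hxy
    rw [hCB, hCB]
    have h1 : Real.exp (-(α * γNa * y / gNap)) < Real.exp (-(α * γNa * x / gNap)) := by
      apply Real.exp_lt_exp.2
      have h2 : α * γNa * x < α * γNa * y :=
        mul_lt_mul_of_pos_left hxy (mul_pos hα hγNa)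
      have : α * γNa * x / gNap < α * γNa * y / gNap := by
        exact div_lt_div_of_pos_right h2 hNap
      linarith
    nlinarith [mul_lt_mul_of_pos_left h1 (mul_pos hCl hNa)]
  · intro hlt p hp
    rw [hCB]
    have he : Real.exp (-(α * γNa * p / gNap)) ≤ 1 := by
      apply Real.exp_le_one_iff.2
      have : 0 ≤ α * γNa * p / gNap := by positivity
      linarith
    nlinarith [mul_le_mul_of_nonneg_left he (le_of_lt (mul_pos hCl hNa)), Real.exp_pos (-(α * γNa * p / gNap))]
end

section
/- Consider the AB configuration of the ABp system (no paracellular pathway): g_{ion,p} = 0 with g_{ion,1}, g_{ion,2} strictly positive for ion ∈ {Na, K}. Then G_{ion,A} = G_{ion,B} = 1/g_{ion,1} for each ion, and hence the concentration products coincide: C_A(p) = C_B(p) for every p. Consequently, if the impermeant charges satisfy z_A = z_B, then the steady-state impermeant concentrations coincide, ξ_A(p) = ξ_B(p), for every pump rate p with 0 < 4·C_A(p) < O_e^2. -/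
open Real

/-- the AB configuration (no paracellular pathway,
`g_{ion,p} = 0`): the conductance combinations of both compartments coincide,
hence so do the concentration products and — when `z_A = z_B` — the
steady-state impermeant concentrations. -/
theorem stmt_14 (gNa1 gNa2 gNap gK1 gK2 gKp : ℝ)
    (hNap0 : gNap = 0) (hKp0 : gKp = 0)
    (hNa1 : 0 < gNa1) (hNa2 : 0 < gNa2) (hK1 : 0 < gK1) (hK2 : 0 < gK2)
    (GNaA GNaB GKA GKB : ℝ)
    (hGNaA : GNaA = (gNa2 + gNap) / (gNa1 * gNa2 + gNa1 * gNap + gNa2 * gNap))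
    (hGNaB : GNaB = gNa2 / (gNa1 * gNa2 + gNa1 * gNap + gNa2 * gNap))
    (hGKA : GKA = (gK2 + gKp) / (gK1 * gK2 + gK1 * gKp + gK2 * gKp))
    (hGKB : GKB = gK2 / (gK1 * gK2 + gK1 * gKp + gK2 * gKp))
    (Na_e K_e Cl_e α γNa γK O_e zA zB : ℝ)
    (hNa : 0 < Na_e) (hK : 0 < K_e) (hCl : 0 < Cl_e)
    (hα : 0 < α) (hγNa : 0 < γNa) (hγK : 0 < γK) (hOe : 0 < O_e)
    (CA CB : ℝ → ℝ)
    (hCA : ∀ p, CA p = Cl_e * (Na_e * Real.exp (-(α * γNa * GNaA * p))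
        + K_e * Real.exp (α * γK * GKA * p)))
    (hCB : ∀ p, CB p = Cl_e * (Na_e * Real.exp (-(α * γNa * GNaB * p))
        + K_e * Real.exp (α * γK * GKB * p)))
    (ξA ξB : ℝ → ℝ)
    (hξA : ∀ p, ξA p = if zA ^ 2 = 1 then (O_e ^ 2 - 4 * CA p) / (2 * O_e)
        else (O_e - Real.sqrt (4 * (1 - zA ^ 2) * CA p + zA ^ 2 * O_e ^ 2)) / (1 - zA ^ 2))
    (hξB : ∀ p, ξB p = if zB ^ 2 = 1 then (O_e ^ 2 - 4 * CB p) / (2 * O_e)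
        else (O_e - Real.sqrt (4 * (1 - zB ^ 2) * CB p + zB ^ 2 * O_e ^ 2)) / (1 - zB ^ 2)) :
    (GNaA = 1 / gNa1 ∧ GNaB = 1 / gNa1 ∧ GKA = 1 / gK1 ∧ GKB = 1 / gK1) ∧
    (∀ p : ℝ, CA p = CB p) ∧
    (zA = zB → ∀ p : ℝ, 0 < p → 0 < 4 * CA p → 4 * CA p < O_e ^ 2 → ξA p = ξB p) := by
  subst hNap0 hKp0
  have hG1 : GNaA = 1 / gNa1 := by
    rw [hGNaA]; field_simp; ring
  have hG2 : GNaB = 1 / gNa1 := by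
    rw [hGNaB]; field_simp; ring
  have hG3 : GKA = 1 / gK1 := by
    rw [hGKA]; field_simp; ring
  have hG4 : GKB = 1 / gK1 := by
    rw [hGKB]; field_simp; ring
  have hCeq : ∀ p, CA p = CB p := by
    intro p; rw [hCA, hCB, hG1, hG2, hG3, hG4]
  refine ⟨⟨hG1, hG2, hG3, hG4⟩, hCeq, ?_⟩
  intro hz p _ _ _
  rw [hξA, hξB, hz, hCeq]
end

section
/- Let O, C and z be real numbers with O > 0, C > 0 and 4·C < O^2. Define ξ := (O - sqrt(4·(1 - z^2)·C + z^2·O^2))/(1 - z^2) if z^2 ≠ 1 and ξ := (O^2 - 4·C)/(2·O) if z^2 = 1. Then 0 < ξ < O, and moreover O + (z - 1)·ξ > 0 and O - (1 + z)·ξ > 0. -/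
open Real

set_option maxHeartbeats 1600000 in
/-- bounds on the closed-form impermeant concentration ξ:
`0 < ξ < O`, and both `O + (z-1)·ξ` (twice the chloride concentration) and
`O - (1+z)·ξ` (twice the cation sum) are positive. -/
theorem stmt_16 (O C z ξ : ℝ) (hO : 0 < O) (hC : 0 < C) (h4C : 4 * C < O ^ 2)
    (hξ : ξ = if z ^ 2 = 1 then (O ^ 2 - 4 * C) / (2 * O)
              else (O - Real.sqrt (4 * (1 - z ^ 2) * C + z ^ 2 * O ^ 2)) / (1 - z ^ 2)) :
    0 < ξ ∧ ξ < O ∧ 0 < O + (z - 1) * ξ ∧ 0 < O - (1 + z) * ξ := by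
  by_cases hz : z ^ 2 = 1
  · rw [if_pos hz] at hξ
    have key : 2 * O * ξ = O ^ 2 - 4 * C := by
      rw [hξ]; field_simp
    have hξpos : 0 < ξ := by nlinarith
    have hξO : ξ < O := by nlinarith
    have hξ2 : 0 < O - 2 * ξ := by nlinarith
    have hz1 : z = 1 ∨ z = -1 := by
      rcases mul_eq_zero.mp (show (z - 1) * (z + 1) = 0 by nlinarith) with h | h
      · left; linarith
      · right; linarith
    rcases hz1 with h | h <;> subst h <;>
      refine ⟨hξpos, hξO, ?_, ?_⟩ <;> nlinarith
  · rw [if_neg hz] at hξ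
    have hD : 0 < 4 * (1 - z ^ 2) * C + z ^ 2 * O ^ 2 := by nlinarith [sq_nonneg z]
    set s := Real.sqrt (4 * (1 - z ^ 2) * C + z ^ 2 * O ^ 2) with hsdef
    have hs2 : s ^ 2 = 4 * (1 - z ^ 2) * C + z ^ 2 * O ^ 2 := Real.sq_sqrt hD.le
    have hs : 0 < s := Real.sqrt_pos.mpr hD
    have hz' : 1 - z ^ 2 ≠ 0 := fun h => hz (by linarith)
    have hξ' : ξ * (1 - z ^ 2) = O - s := by
      rw [hξ]; field_simp
    have e1 : (1 + z) * (O + (z - 1) * ξ) = z * O + s := by linear_combination -hξ'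
    have e2 : (1 - z) * (O - (1 + z) * ξ) = s - z * O := by linear_combination -hξ'
    clear_value s
    clear hξ hsdef
    rcases lt_or_gt_of_ne hz' with hp | hp
    · -- z^2 > 1
      have hsO : O < s := by nlinarith
      have hszO : s ^ 2 < z ^ 2 * O ^ 2 := by nlinarith
      have hξpos : 0 < ξ := by nlinarith
      have hzcase : z < -1 ∨ 1 < z := by
        rcases lt_trichotomy z 0 with h | h | h
        · left; nlinarith
        · exfalso; nlinarith
        · right; nlinarith
      rcases hzcase with h | h
      · -- z < -1 : 1+z < 0, z*O + s < 0 ; 1-z > 0, s - z*O > 0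
        have hzO : 0 < -z * O := mul_pos (by linarith) hO
        have h2 : 0 < s - z * O := by nlinarith
        have h1 : z * O + s < 0 := by nlinarith [mul_nonneg (show (0:ℝ) ≤ s - z * O by linarith) (show (0:ℝ) ≤ s - z * O by linarith)]
        have hsz2 : s < z ^ 2 * O := by
          have : 0 < (z ^ 2 + z) * O := mul_pos (by nlinarith) hO
          nlinarith
        have hξO : ξ < O := by nlinarith
        exact ⟨hξpos, hξO, by nlinarith, by nlinarith⟩
      · -- 1 < z
        have hzO : 0 < z * O := mul_pos (by linarith) hO
        have h1 : 0 < z * O + s := by linarith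
        have h2 : s - z * O < 0 := by nlinarith
        have hsz2 : s < z ^ 2 * O := by
          have : 0 < (z ^ 2 - z) * O := mul_pos (by nlinarith) hO
          nlinarith
        have hξO : ξ < O := by nlinarith
        exact ⟨hξpos, hξO, by nlinarith, by nlinarith⟩
    · -- z^2 < 1
      have hzlt1 : -1 < z := by nlinarith
      have hzlt2 : z < 1 := by nlinarith
      have hsO : s < O := by nlinarith
      have hszO : z ^ 2 * O ^ 2 < s ^ 2 := by nlinarith
      have h1 : 0 < z * O + s := by nlinarith [sq_nonneg (z * O + s)]
      have h2 : 0 < s - z * O := by nlinarith [sq_nonneg (z * O - s)]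
      have hξpos : 0 < ξ := by nlinarith
      have hsz2 : z ^ 2 * O < s := by
        have h0 : (0:ℝ) ≤ z ^ 2 * O := mul_nonneg (sq_nonneg z) hO.le
        nlinarith [mul_pos (mul_pos hO hO) hC, sq_nonneg z]
      have hξO : ξ < O := by nlinarith
      exact ⟨hξpos, hξO, by nlinarith, by nlinarith⟩
end
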